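/- arXiv:1908.00786 — 3 statements merged into one kernel-verified Lean document; each statement's English description precedes it below -/
import Mathlib

section
/- The function c ↦ c·f(b + a·c) is strictly concave on c > 0, where f(t) = (1 - e^{-t})/t, a > 0, and b > 0. -/
/-!
Put `f t = (1 - exp (-t)) / t` and `t = b + a * c`. Since `a * c = t - b`, we have
`c * f t = ((1 - exp (-t)) - b * f t) / a`: a strictly concave function minus a nonnegative
multiple of `f`, precomposed with an affine map. It remains to see that `f` is convex on `t > 0`,
i.e. `f'' t = (2 - exp (-t) * (t ^ 2 + 2 * t + 2)) / t ^ 3 ≥ 0`, which is `1 + t + t ^ 2 / 2 ≤ exp t`.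
-/

open Real Set

lemma StrictConcaveOn.const_mul_of_pos {E : Type*} [AddCommMonoid E] [Module ℝ E] {s : Set E}
    {g : E → ℝ} (hg : StrictConcaveOn ℝ s g) {k : ℝ} (hk : 0 < k) : StrictConcaveOn ℝ s fun x => k * g x := by
  refine ⟨hg.1, fun x hx y hy hxy p q hp hq hpq => ?_⟩
  have := mul_lt_mul_of_pos_left (hg.2 hx hy hxy hp hq hpq) hk
  simp only [smul_eq_mul] at this ⊢
  linarith

lemma StrictConcaveOn.comp_add_mul {s : Set ℝ} {g : ℝ → ℝ} (hg : StrictConcaveOn ℝ s g)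
    {a : ℝ} (ha : a ≠ 0) (b : ℝ) :
    StrictConcaveOn ℝ ((fun c => b + a * c) ⁻¹' s) fun c => g (b + a * c) := by
  have hcombo : ∀ x y p q : ℝ, p + q = 1 →
      b + a * (p * x + q * y) = p * (b + a * x) + q * (b + a * y) := fun x y p q hpq => by
    linear_combination b * hpq.symm
  refine ⟨fun x hx y hy p q hp hq hpq => ?_, fun x hx y hy hxy p q hp hq hpq => ?_⟩
  · simpa only [mem_preimage, smul_eq_mul, hcombo x y p q hpq] using hg.1 hx hy hp hq hpq
  · have hne : b + a * x ≠ b + a * y := by simpa [ha] using hxy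
    simpa only [smul_eq_mul, hcombo x y p q hpq] using hg.2 hx hy hne hp hq hpq

lemma strictConcaveOn_one_sub_exp_neg : StrictConcaveOn ℝ univ fun t => 1 - exp (-t) := by
  refine ⟨convex_univ, fun x _ y _ hxy p q hp hq hpq => ?_⟩
  have := strictConvexOn_exp.2 (mem_univ (-x)) (mem_univ (-y)) (neg_injective.ne hxy) hp hq hpq
  simp only [smul_eq_mul, mul_neg] at this ⊢
  rw [← neg_add] at this
  linear_combination this + hpq

lemma hasDerivAt_one_sub_exp_neg_div {t : ℝ} (ht : t ≠ 0) :
    HasDerivAt (fun t => (1 - exp (-t)) / t) ((exp (-t) * (t + 1) - 1) / t ^ 2) t := by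
  refine ((((hasDerivAt_neg t).exp).const_sub 1).div (hasDerivAt_id t) ht).congr_deriv ?_
  simp only [id]
  ring

lemma hasDerivAt_exp_neg_mul_add_one_sub_one_div {t : ℝ} (ht : t ≠ 0) :
    HasDerivAt (fun t => (exp (-t) * (t + 1) - 1) / t ^ 2)
      ((2 - exp (-t) * (t ^ 2 + 2 * t + 2)) / t ^ 3) t := by
  refine (((((hasDerivAt_neg t).exp).mul ((hasDerivAt_id t).add_const 1)).sub_const 1).div
    (hasDerivAt_pow 2 t) (pow_ne_zero 2 ht)).congr_deriv ?_
  simp only [Pi.mul_apply, id]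
  field_simp
  ring

lemma exp_neg_mul_quadratic_le {t : ℝ} (ht : 0 ≤ t) : exp (-t) * (t ^ 2 + 2 * t + 2) ≤ 2 := by
  rw [exp_neg, inv_mul_le_iff₀ (exp_pos t)]
  linarith [quadratic_le_exp_of_nonneg ht]

lemma convexOn_one_sub_exp_neg_div : ConvexOn ℝ (Ioi 0) fun t => (1 - exp (-t)) / t := by
  refine convexOn_of_hasDerivWithinAt2_nonneg (convex_Ioi 0)
    (fun t ht => (hasDerivAt_one_sub_exp_neg_div (ne_of_gt ht)).continuousAt.continuousWithinAt)
    (f' := fun t => (exp (-t) * (t + 1) - 1) / t ^ 2)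
    (f'' := fun t => (2 - exp (-t) * (t ^ 2 + 2 * t + 2)) / t ^ 3) ?_ ?_ ?_ <;>
    rw [interior_Ioi] <;> intro t (ht : 0 < t)
  · exact (hasDerivAt_one_sub_exp_neg_div ht.ne').hasDerivWithinAt
  · exact (hasDerivAt_exp_neg_mul_add_one_sub_one_div ht.ne').hasDerivWithinAt
  · exact div_nonneg (sub_nonneg.2 (exp_neg_mul_quadratic_le ht.le)) (by positivity)

theorem stmt_5 (a b : ℝ) (ha : 0 < a) (hb : 0 < b) :
    StrictConcaveOn ℝ (Set.Ioi (0 : ℝ))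
      (fun c : ℝ => c * ((1 - Real.exp (-(b + a * c))) / (b + a * c))) := by
  have hg : StrictConcaveOn ℝ (Ioi 0) fun t => 1 - exp (-t) - b * ((1 - exp (-t)) / t) :=
    (strictConcaveOn_one_sub_exp_neg.subset (subset_univ _) (convex_Ioi 0)).sub_convexOn
      (convexOn_one_sub_exp_neg_div.smul hb.le)
  have hpos : ∀ c ∈ Ioi (0 : ℝ), 0 < b + a * c := fun c (hc : 0 < c) => by positivity
  refine (((hg.comp_add_mul ha.ne' b).subset hpos (convex_Ioi 0)).const_mul_of_pos
    (inv_pos.2 ha)).congr fun c hc => ?_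
  have hne : b + a * c ≠ 0 := (hpos c hc).ne'
  field_simp
  ring
end

section
/- Let d₁, …, d_M be independent random variables where d_i has PDF f_i(r) = 2πc_i r exp(-πc_i r²) on r ≥ 0 (nearest-neighbor distances of independent PPPs with intensities c_i > 0). Fix m and weights w_i = (B_i/B_m)^{2/α} > 0 with w_m = 1. Then the probability that d_m ≤ R and d_i > (B_i/B_m)^{1/α} d_m for all i ≠ m equals (c_m / Σ_i w_i c_i)·(1 - exp(-π (Σ_i w_i c_i) R²)). -/
open Real MeasureTheory ProbabilityTheory
set_option maxHeartbeats 1000000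


lemma ftc_gauss (k : ℝ) (t : ℝ) :
    ∫ r in (0:ℝ)..t, 2*π*k*r*Real.exp (-(π*k*r^2)) = 1 - Real.exp (-(π*k*t^2)) := by
  have hD : ∀ r : ℝ, HasDerivAt (fun r => -Real.exp (-(π*k*r^2)))
      (2*π*k*r*Real.exp (-(π*k*r^2))) r := by
    intro r
    have h1 : HasDerivAt (fun r : ℝ => -(π*k*r^2)) (-(π*k*(2*r))) r := by
      simpa using (((hasDerivAt_pow 2 r).const_mul (π*k)).fun_neg)
    have h2 := (Real.hasDerivAt_exp (-(π*k*r^2))).comp r h1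
    have h3 := h2.fun_neg
    convert h3 using 1 <;> try rfl
    ring
  have hi : IntervalIntegrable (fun r => 2*π*k*r*Real.exp (-(π*k*r^2))) volume 0 t := by
    apply Continuous.intervalIntegrable
    continuity
  rw [intervalIntegral.integral_eq_sub_of_hasDerivAt (fun x _ => hD x) hi]
  simp; ring

lemma map_eq_withDensity {Ω : Type*} [MeasurableSpace Ω] (P : Measure Ω) [IsProbabilityMeasure P]
    (k : ℝ) (hk : 0 < k) (X : Ω → ℝ) (hX : Measurable X)
    (hs : ∀ r : ℝ, 0 ≤ r → (P {ω | r < X ω}).toReal = Real.exp (-(π*k*r^2))) :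
    P.map X = volume.withDensity
      (fun r => if 0 < r then ENNReal.ofReal (2*π*k*r*Real.exp (-(π*k*r^2))) else 0) := by
  have hprob : IsProbabilityMeasure (P.map X) := Measure.isProbabilityMeasure_map hX.aemeasurable
  have hval : ∀ r : ℝ, 0 ≤ r → P {ω | r < X ω} = ENNReal.ofReal (Real.exp (-(π*k*r^2))) := by
    intro r hr
    rw [← ENNReal.ofReal_toReal (measure_ne_top P _), hs r hr]
  have hcompl : ∀ t : ℝ, P {ω | X ω ≤ t} = 1 - P {ω | t < X ω} := by
    intro t
    have h1 : {ω | X ω ≤ t} = {ω | t < X ω}ᶜ := by ext ω; simp [not_lt]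
    have hm : MeasurableSet {ω | t < X ω} := measurableSet_lt measurable_const hX
    rw [h1, prob_compl_eq_one_sub hm]
  have hIic : ∀ t : ℝ, t ≤ 0 → P {ω | X ω ≤ t} = 0 := by
    intro t ht
    have h0 : P {ω | X ω ≤ 0} = 0 := by
      rw [hcompl, hval 0 le_rfl]; simp
    refine measure_mono_null (fun ω hω => ?_) h0
    exact le_trans hω ht
  apply Measure.ext_of_Iic
  intro t
  rw [Measure.map_apply hX measurableSet_Iic,
    withDensity_apply _ measurableSet_Iic]
  have hset : X ⁻¹' Set.Iic t = {ω | X ω ≤ t} := rfl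
  rw [hset]
  rcases le_or_gt t 0 with ht | ht
  · rw [hIic t ht]
    rw [setLIntegral_congr_fun measurableSet_Iic
      (fun r (hr : r ≤ t) => if_neg (by push_neg; linarith))]
    simp
  · have hsplit : Set.Iic (0:ℝ) ∪ Set.Ioc 0 t = Set.Iic t := Set.Iic_union_Ioc_eq_Iic ht.le
    rw [← hsplit, lintegral_union measurableSet_Ioc (Set.Iic_disjoint_Ioc le_rfl)]
    have hz : ∫⁻ r in Set.Iic (0:ℝ),
        (if 0 < r then ENNReal.ofReal (2*π*k*r*Real.exp (-(π*k*r^2))) else 0) = 0 := by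
      rw [setLIntegral_congr_fun measurableSet_Iic
        (fun r (hr : r ≤ 0) => if_neg (by push_neg; linarith))]
      simp
    rw [hz, zero_add]
    have hfun : ∫⁻ r in Set.Ioc (0:ℝ) t,
        (if 0 < r then ENNReal.ofReal (2*π*k*r*Real.exp (-(π*k*r^2))) else 0)
        = ∫⁻ r in Set.Ioc (0:ℝ) t, ENNReal.ofReal (2*π*k*r*Real.exp (-(π*k*r^2))) := by
      apply setLIntegral_congr_fun measurableSet_Ioc
      exact (fun r hr => if_pos hr.1)
    rw [hfun]
    have hcont : Continuous (fun r : ℝ => 2*π*k*r*Real.exp (-(π*k*r^2))) := by continuity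
    have hint : IntegrableOn (fun r : ℝ => 2*π*k*r*Real.exp (-(π*k*r^2))) (Set.Ioc 0 t) volume :=
      (hcont.integrableOn_Icc (a := 0) (b := t)).mono_set Set.Ioc_subset_Icc_self
    have hnn : 0 ≤ᵐ[volume.restrict (Set.Ioc (0:ℝ) t)]
        (fun r : ℝ => 2*π*k*r*Real.exp (-(π*k*r^2))) :=
      (ae_restrict_iff' measurableSet_Ioc).2 (ae_of_all _ (fun r hr => by
        have : (0:ℝ) < r := hr.1
        positivity))
    rw [← ofReal_integral_eq_lintegral_ofReal hint hnn]
    rw [← intervalIntegral.integral_of_le ht.le, ftc_gauss]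
    rw [hcompl, hval t ht.le]
    rw [ENNReal.ofReal_sub _ (Real.exp_nonneg _), ENNReal.ofReal_one]

theorem main_aux {Ω : Type*} [MeasurableSpace Ω] (P : Measure Ω) [IsProbabilityMeasure P]
    (M : ℕ) (c a : Fin M → ℝ) (hc : ∀ i, 0 < c i) (ha : ∀ i, 0 < a i)
    (R : ℝ) (hR : 0 < R) (m : Fin M) (ham : a m = 1)
    (d : Fin M → Ω → ℝ) (hmeas : ∀ i, Measurable (d i))
    (hindep : iIndepFun (m := fun _ => Real.measurableSpace) d P)
    (hdist : ∀ i, ∀ r : ℝ, 0 ≤ r →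
      (P {ω | r < d i ω}).toReal = Real.exp (-(π * c i * r ^ 2))) :
    (P {ω | d m ω ≤ R ∧ ∀ i ≠ m, a i * d m ω < d i ω}).toReal
      = (c m / ∑ i, (a i)^2 * c i) *
        (1 - Real.exp (-(π * (∑ i, (a i)^2 * c i) * R ^ 2))) := by
  classical
  set S := ∑ i, (a i)^2 * c i with hSdef
  set T := Finset.univ.erase m with hTdef
  set S' := ∑ i ∈ T, (a i)^2 * c i with hS'def
  have hS'nn : 0 ≤ S' := Finset.sum_nonneg fun i _ => mul_nonneg (sq_nonneg _) (hc i).le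
  have hSc : S = c m + S' := by
    rw [hSdef, ← Finset.add_sum_erase _ _ (Finset.mem_univ m), ham, ← hTdef, ← hS'def]; ring
  have hS : 0 < S := by rw [hSc]; linarith [hc m]
  set g2 : Ω → ({x // x ∈ T} → ℝ) := fun ω i => d i ω with hg2def
  have hg2meas : Measurable g2 := measurable_pi_lambda _ fun i => hmeas i
  have hdisj : Disjoint ({m} : Finset (Fin M)) T :=
    Finset.disjoint_singleton_left.mpr (Finset.notMem_erase m _)
  have hind2 : IndepFun (d m) g2 P := by
    have hIF := hindep.indepFun_finset {m} T hdisj hmeas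
    exact hIF.comp
      (φ := fun v : ({x // x ∈ ({m}:Finset (Fin M))} → ℝ) => v ⟨m, Finset.mem_singleton_self m⟩)
      (ψ := id) (measurable_pi_apply _) measurable_id
  set s : Set (ℝ × ({x // x ∈ T} → ℝ)) :=
    {p | p.1 ≤ R ∧ ∀ i : {x // x ∈ T}, a i * p.1 < p.2 i} with hsdef
  have hsm : MeasurableSet s := by
    have : s = {p : ℝ × ({x // x ∈ T} → ℝ) | p.1 ≤ R}
        ∩ ⋂ i : {x // x ∈ T}, {p : ℝ × ({x // x ∈ T} → ℝ) | a i * p.1 < p.2 i} := by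
      ext p; simp [hsdef, Set.mem_iInter]
    rw [this]
    exact (measurableSet_le measurable_fst measurable_const).inter
      (MeasurableSet.iInter fun i => measurableSet_lt (measurable_fst.const_mul _)
        ((measurable_pi_apply i).comp measurable_snd))
  have hEeq : {ω | d m ω ≤ R ∧ ∀ i ≠ m, a i * d m ω < d i ω}
      = (fun ω => (d m ω, g2 ω)) ⁻¹' s := by
    ext ω
    simp only [hsdef, Set.mem_setOf_eq, Set.mem_preimage, hg2def]
    constructor
    · rintro ⟨h1, h2⟩
      exact ⟨h1, fun i => h2 i.1 (Finset.mem_erase.mp i.2).1⟩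
    · rintro ⟨h1, h2⟩
      exact ⟨h1, fun i hi => h2 ⟨i, Finset.mem_erase.mpr ⟨hi, Finset.mem_univ i⟩⟩⟩
  have hjoint := (indepFun_iff_map_prod_eq_prod_map_map (hmeas m).aemeasurable
    hg2meas.aemeasurable).mp hind2
  have hmain : P ((fun ω => (d m ω, g2 ω)) ⁻¹' s) = ((P.map (d m)).prod (P.map g2)) s := by
    rw [← Measure.map_apply ((hmeas m).prodMk hg2meas) hsm, hjoint]
  rw [hEeq, hmain, Measure.prod_apply hsm]
  have hinner : ∀ r : ℝ, 0 < r → (P.map g2) (Prod.mk r ⁻¹' s)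
      = Set.indicator (Set.Iic R)
        (fun r => ENNReal.ofReal (Real.exp (-(π * S' * r^2)))) r := by
    intro r hr
    by_cases hrR : r ≤ R
    · rw [Set.indicator_of_mem (Set.mem_Iic.mpr hrR)]
      have hsec : Prod.mk r ⁻¹' s = {y : {x // x ∈ T} → ℝ | ∀ i : {x // x ∈ T}, a i.1 * r < y i} := by
        ext y; simp [hsdef, hrR]
      have hysm : MeasurableSet {y : {x // x ∈ T} → ℝ | ∀ i : {x // x ∈ T}, a i.1 * r < y i} := by
        have : {y : {x // x ∈ T} → ℝ | ∀ i : {x // x ∈ T}, a i.1 * r < y i}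
            = ⋂ i : {x // x ∈ T}, {y : {x // x ∈ T} → ℝ | a i.1 * r < y i} := by
          ext y; simp [Set.mem_iInter]
        rw [this]
        exact MeasurableSet.iInter fun i => measurableSet_lt measurable_const
          (measurable_pi_apply i)
      rw [hsec, Measure.map_apply hg2meas hysm]
      have hpre : g2 ⁻¹' {y : {x // x ∈ T} → ℝ | ∀ i : {x // x ∈ T}, a i.1 * r < y i}
          = ⋂ i ∈ T, d i ⁻¹' Set.Ioi (a i * r) := by
        ext ω
        simp only [Set.mem_preimage, Set.mem_setOf_eq, hg2def, Set.mem_iInter,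
          Set.mem_Ioi]
        exact ⟨fun h i hi => h ⟨i, hi⟩, fun h i => h i.1 i.2⟩
      rw [hpre, hindep.measure_inter_preimage_eq_mul T
        (sets := fun i => Set.Ioi (a i * r)) (fun i _ => measurableSet_Ioi)]
      have hterm : ∀ i ∈ T, P (d i ⁻¹' Set.Ioi (a i * r))
          = ENNReal.ofReal (Real.exp (-(π * ((a i)^2 * c i) * r^2))) := by
        intro i _
        have h1 := hdist i (a i * r) (mul_nonneg (ha i).le hr.le)
        have h2 : P (d i ⁻¹' Set.Ioi (a i * r)) = P {ω | a i * r < d i ω} := rfl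
        rw [h2, ← ENNReal.ofReal_toReal (measure_ne_top P _), h1]
        congr 2
        ring
      rw [Finset.prod_congr rfl hterm,
        ← ENNReal.ofReal_prod_of_nonneg (fun i _ => (Real.exp_nonneg _)),
        ← Real.exp_sum]
      congr 2
      rw [hS'def, Finset.mul_sum, Finset.sum_mul, ← Finset.sum_neg_distrib]
    · rw [Set.indicator_of_notMem (by simpa using hrR)]
      have : Prod.mk r ⁻¹' s = ∅ := by
        ext y; simp [hsdef, hrR]
      simp [this]
  have hmapd : P.map (d m) = volume.withDensity
      (fun r => if 0 < r then ENNReal.ofReal (2*π*(c m)*r*Real.exp (-(π*(c m)*r^2))) else 0) :=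
    map_eq_withDensity P (c m) (hc m) (d m) (hmeas m) (hdist m)
  have hdensmeas : Measurable
      (fun r : ℝ => if 0 < r then ENNReal.ofReal (2*π*(c m)*r*Real.exp (-(π*(c m)*r^2))) else 0) := by
    refine Measurable.ite (measurableSet_lt measurable_const measurable_id) ?_ measurable_const
    exact (Continuous.measurable (by continuity)).ennreal_ofReal
  have h0 : (P.map (d m)) (Set.Iic (0:ℝ)) = 0 := by
    rw [hmapd, withDensity_apply _ measurableSet_Iic,
      setLIntegral_congr_fun measurableSet_Iic
        (fun r (hr : r ≤ 0) => if_neg (by push_neg; linarith))]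
    simp
  have hae : ∀ᵐ r ∂(P.map (d m)), 0 < r := by
    rw [ae_iff]
    have hset : {r : ℝ | ¬ 0 < r} = Set.Iic 0 := by ext r; simp
    rw [hset]; exact h0
  have hcong : ∫⁻ r, (P.map g2) (Prod.mk r ⁻¹' s) ∂(P.map (d m))
      = ∫⁻ r, Set.indicator (Set.Iic R)
          (fun r => ENNReal.ofReal (Real.exp (-(π * S' * r^2)))) r ∂(P.map (d m)) := by
    apply lintegral_congr_ae
    filter_upwards [hae] with r hr
    exact hinner r hr
  have hindm : Measurable (fun r : ℝ => Set.indicator (Set.Iic R)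
      (fun r => ENNReal.ofReal (Real.exp (-(π * S' * r^2)))) r) := by
    refine Measurable.indicator ?_ measurableSet_Iic
    exact (Continuous.measurable (by fun_prop)).ennreal_ofReal
  rw [hcong, hmapd, lintegral_withDensity_eq_lintegral_mul _ hdensmeas hindm]
  have hptwise : ∀ r : ℝ,
      ((fun r : ℝ => if 0 < r then ENNReal.ofReal (2*π*(c m)*r*Real.exp (-(π*(c m)*r^2))) else 0)
        * fun r : ℝ => Set.indicator (Set.Iic R)
          (fun r => ENNReal.ofReal (Real.exp (-(π * S' * r^2)))) r) r
      = Set.indicator (Set.Ioc 0 R)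
          (fun r => ENNReal.ofReal (2*π*(c m)*r*Real.exp (-(π*S*r^2)))) r := by
    intro r
    simp only [Pi.mul_apply]
    by_cases h1 : 0 < r
    · by_cases h2 : r ≤ R
      · rw [if_pos h1, Set.indicator_of_mem (Set.mem_Iic.mpr h2),
          Set.indicator_of_mem (Set.mem_Ioc.mpr ⟨h1, h2⟩),
          ← ENNReal.ofReal_mul (by have := hc m; positivity)]
        congr 1
        rw [mul_assoc, ← Real.exp_add]
        congr 1
        rw [hSc]; ring
      · rw [Set.indicator_of_notMem (by simpa using h2),
          Set.indicator_of_notMem (fun hmem => h2 (Set.mem_Ioc.mp hmem).2)]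
        simp
    · rw [if_neg h1, Set.indicator_of_notMem (fun hmem => h1 (Set.mem_Ioc.mp hmem).1)]
      simp
  rw [lintegral_congr hptwise, lintegral_indicator measurableSet_Ioc]
  have hcont : Continuous (fun r : ℝ => 2*π*(c m)*r*Real.exp (-(π*S*r^2))) := by continuity
  have hint : IntegrableOn (fun r : ℝ => 2*π*(c m)*r*Real.exp (-(π*S*r^2)))
      (Set.Ioc 0 R) volume :=
    (hcont.integrableOn_Icc (a := 0) (b := R)).mono_set Set.Ioc_subset_Icc_self
  have hnn : 0 ≤ᵐ[volume.restrict (Set.Ioc (0:ℝ) R)]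
      (fun r : ℝ => 2*π*(c m)*r*Real.exp (-(π*S*r^2))) :=
    (ae_restrict_iff' measurableSet_Ioc).2 (ae_of_all _ (fun r hr => by
      have : (0:ℝ) < r := hr.1
      have := hc m
      positivity))
  rw [← ofReal_integral_eq_lintegral_ofReal hint hnn,
    ← intervalIntegral.integral_of_le hR.le]
  have hscale : ∀ r : ℝ, 2*π*(c m)*r*Real.exp (-(π*S*r^2))
      = (c m / S) * (2*π*S*r*Real.exp (-(π*S*r^2))) := by
    intro r; field_simp
  simp only [hscale]
  rw [intervalIntegral.integral_const_mul, ftc_gauss]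
  rw [ENNReal.toReal_ofReal]
  apply mul_nonneg (div_nonneg (hc m).le hS.le)
  have hle : Real.exp (-(π*S*R^2)) ≤ 1 := by
    rw [← Real.exp_zero]
    apply Real.exp_le_exp.mpr
    have : (0:ℝ) ≤ π*S*R^2 := by positivity
    linarith
  linarith

theorem stmt_7 {Ω : Type*} [MeasurableSpace Ω] (P : Measure Ω) [IsProbabilityMeasure P]
    (M : ℕ) (hM : 0 < M) (c B : Fin M → ℝ) (hc : ∀ i, 0 < c i) (hB : ∀ i, 0 < B i)
    (α R : ℝ) (hα : 0 < α) (hR : 0 < R) (m : Fin M)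
    (d : Fin M → Ω → ℝ) (hmeas : ∀ i, Measurable (d i))
    (hindep : iIndepFun (m := fun _ => Real.measurableSpace) d P)
    (hdist : ∀ i, ∀ r : ℝ, 0 ≤ r →
      (P {ω | r < d i ω}).toReal = Real.exp (-(π * c i * r ^ 2))) :
    (P {ω | d m ω ≤ R ∧ ∀ i ≠ m, (B i / B m) ^ (1 / α) * d m ω < d i ω}).toReal
      = (c m / ∑ i, (B i / B m) ^ (2 / α) * c i) *
        (1 - Real.exp (-(π * (∑ i, (B i / B m) ^ (2 / α) * c i) * R ^ 2))) := by
  have ha : ∀ i, (0:ℝ) < (B i / B m) ^ (1 / α) :=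
    fun i => Real.rpow_pos_of_pos (div_pos (hB i) (hB m)) _
  have ham : ((B m / B m : ℝ)) ^ (1 / α) = 1 := by
    rw [div_self (hB m).ne', Real.one_rpow]
  have hsq : ∀ i, ((B i / B m : ℝ) ^ (1 / α)) ^ 2 = (B i / B m) ^ (2 / α) := by
    intro i
    rw [← Real.rpow_natCast ((B i / B m) ^ (1 / α)) 2,
      ← Real.rpow_mul (div_pos (hB i) (hB m)).le]
    congr 1
    push_cast
    ring
  have hsum : ∑ i, ((B i / B m : ℝ)) ^ (2 / α) * c i
      = ∑ i, ((fun i => ((B i / B m : ℝ)) ^ (1 / α)) i) ^ 2 * c i :=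
    Finset.sum_congr rfl fun i _ => by rw [hsq]
  rw [hsum]
  exact main_aux P M c (fun i => (B i / B m) ^ (1 / α)) hc ha R hR m ham d hmeas hindep hdist
end

section
/- Let g(c) = f(φ(c)) + a·c·f'(φ(c)) with f(t) = (1-e^{-t})/t, φ(c) = b + a·c, a > 0, b > 0. Then g is strictly decreasing on c ≥ 0, and for any η with 0 < η < g(0), the equation g(c) = η has exactly one root in (0, ∞) provided lim_{c→∞} g(c) < η. -/
/-! With `φ = b + a c`, `g'(c) = a (2 f'(φ) + a c f''(φ))`. Since `f'' > 0` on `(0, ∞)` and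
`2 f'(t) + t f''(t) = -e^{-t}`, this is negative whenever `0 ≤ a c ≤ φ`, i.e. for `c ≥ 0`.
So `g` is strictly decreasing on `[0, ∞)`: the root is unique, and it exists by the intermediate
value theorem between `0` and a point where `g` has dropped below `η`. -/

open Real Filter Set

noncomputable def f (t : ℝ) : ℝ := (1 - Real.exp (-t)) / t

noncomputable def g (a b c : ℝ) : ℝ :=
  f (b + a * c) + a * c * deriv f (b + a * c)

noncomputable def f' (t : ℝ) : ℝ := ((t + 1) * exp (-t) - 1) / t ^ 2

noncomputable def f'' (t : ℝ) : ℝ := (2 - exp (-t) * (t ^ 2 + 2 * t + 2)) / t ^ 3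

lemma hasDerivAt_exp_neg (t : ℝ) : HasDerivAt (fun t => exp (-t)) (-exp (-t)) t := by
  simpa using (hasDerivAt_neg t).exp

lemma hasDerivAt_f {t : ℝ} (ht : t ≠ 0) : HasDerivAt f (f' t) t := by
  have h : HasDerivAt f _ t := ((hasDerivAt_exp_neg t).const_sub 1).div (hasDerivAt_id t) ht
  convert h using 1
  unfold f'
  field_simp
  ring

lemma deriv_f {t : ℝ} (ht : t ≠ 0) : deriv f t = f' t := (hasDerivAt_f ht).deriv

lemma hasDerivAt_f' {t : ℝ} (ht : t ≠ 0) : HasDerivAt f' (f'' t) t := by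
  have hnum := (((hasDerivAt_id t).add_const 1).mul (hasDerivAt_exp_neg t)).sub_const 1
  have h : HasDerivAt f' _ t := hnum.div (hasDerivAt_pow 2 t) (pow_ne_zero 2 ht)
  convert h using 1
  simp only [f'', id, Pi.mul_apply]
  field_simp
  ring

lemma f''_pos {t : ℝ} (ht : 0 < t) : 0 < f'' t := by
  have hcubic : 1 + t + t ^ 2 / 2 + t ^ 3 / 6 ≤ exp t := by
    have h := sum_le_exp_of_nonneg ht.le 4
    simp only [Finset.sum_range_succ, Finset.sum_range_zero, Nat.factorial] at h
    norm_num at h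
    linarith
  have hinv : exp (-t) * exp t = 1 := by rw [← exp_add, neg_add_cancel, exp_zero]
  have hnum : exp (-t) * (t ^ 2 + 2 * t + 2) < 2 := by
    nlinarith [exp_pos (-t), pow_pos ht 3]
  exact div_pos (by linarith) (pow_pos ht 3)

lemma two_mul_f'_add_mul_f'' {t : ℝ} (ht : t ≠ 0) : 2 * f' t + t * f'' t = -exp (-t) := by
  simp only [f', f'']
  field_simp
  ring

lemma two_mul_f'_add_mul_f''_neg {s t : ℝ} (ht : 0 < t) (hst : s ≤ t) :
    2 * f' t + s * f'' t < 0 := by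
  have hmono : s * f'' t ≤ t * f'' t := mul_le_mul_of_nonneg_right hst (f''_pos ht).le
  linarith [two_mul_f'_add_mul_f'' ht.ne', exp_pos (-t)]

lemma hasDerivAt_g {a b c : ℝ} (hc : 0 < b + a * c) :
    HasDerivAt (g a b) (a * (2 * f' (b + a * c) + a * c * f'' (b + a * c))) c := by
  have hφ : HasDerivAt (fun c => b + a * c) a c := by
    simpa using ((hasDerivAt_id c).const_mul a).const_add b
  have hac : HasDerivAt (fun c => a * c) a c := by
    simpa using (hasDerivAt_id c).const_mul a
  have hsum : HasDerivAt (fun c => f (b + a * c) + a * c * f' (b + a * c))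
      (f' (b + a * c) * a + (a * f' (b + a * c) + a * c * (f'' (b + a * c) * a))) c :=
    ((hasDerivAt_f hc.ne').comp (h₂ := f) c hφ).add
      (hac.mul ((hasDerivAt_f' hc.ne').comp (h₂ := f') c hφ))
  have heq : (fun c => f (b + a * c) + a * c * f' (b + a * c)) =ᶠ[nhds c] g a b := by
    filter_upwards [hφ.continuousAt.eventually (lt_mem_nhds hc)] with x hx
    rw [g, deriv_f hx.ne']
  have hg : HasDerivAt (g a b) _ c := hsum.congr_of_eventuallyEq heq.symm
  convert hg using 1
  ring

lemma continuousOn_g {a b : ℝ} (ha : 0 ≤ a) (hb : 0 < b) : ContinuousOn (g a b) (Ici 0) :=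
  fun c hc => (hasDerivAt_g (by nlinarith [mem_Ici.mp hc])).continuousAt.continuousWithinAt

lemma strictAntiOn_g {a b : ℝ} (ha : 0 < a) (hb : 0 < b) : StrictAntiOn (g a b) (Ici 0) := by
  refine strictAntiOn_of_deriv_neg (convex_Ici 0) (continuousOn_g ha.le hb) fun c hc => ?_
  rw [interior_Ici, mem_Ioi] at hc
  have hφ : 0 < b + a * c := by positivity
  rw [(hasDerivAt_g hφ).deriv]
  exact mul_neg_of_pos_of_neg ha (two_mul_f'_add_mul_f''_neg hφ (by linarith))

lemma StrictAntiOn.existsUnique_pos_eq {φ : ℝ → ℝ} {η : ℝ} (hanti : StrictAntiOn φ (Ici 0))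
    (hcont : ContinuousOn φ (Ici 0)) (hη : η < φ 0) (hlt : ∀ᶠ x in atTop, φ x < η) :
    ∃! x, 0 < x ∧ φ x = η := by
  obtain ⟨c, hc0, hcη⟩ := ((eventually_ge_atTop 0).and hlt).exists
  obtain ⟨x, ⟨hx0, -⟩, hxη⟩ :=
    intermediate_value_Icc' hc0 (hcont.mono Icc_subset_Ici_self) ⟨hcη.le, hη.le⟩
  have hx : 0 < x := hx0.lt_of_ne (by rintro rfl; exact hη.ne' hxη)
  exact ⟨x, ⟨hx, hxη⟩, fun y ⟨hy, hyη⟩ => hanti.injOn hy.le hx.le (hyη.trans hxη.symm)⟩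

theorem stmt_11_general (a b η L : ℝ) (ha : 0 < a) (hb : 0 < b)
    (hL : Tendsto (g a b) atTop (nhds L)) (hLη : L < η)
    (hηg : η < g a b 0) :
    StrictAntiOn (g a b) (Set.Ici 0) ∧ ∃! x : ℝ, 0 < x ∧ g a b x = η :=
  ⟨strictAntiOn_g ha hb, (strictAntiOn_g ha hb).existsUnique_pos_eq (continuousOn_g ha.le hb) hηg
    (hL.eventually_lt_const hLη)⟩

theorem stmt_11 (a b η L : ℝ) (ha : 0 < a) (hb : 0 < b)
    (hL : Tendsto (g a b) atTop (nhds L)) (hLη : L < η) (hη0 : 0 < η)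
    (hηg : η < g a b 0) :
    StrictAntiOn (g a b) (Set.Ici 0) ∧ ∃! x : ℝ, 0 < x ∧ g a b x = η :=
  stmt_11_general a b η L ha hb hL hLη hηg
end
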